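/- Let α ∈ (0,1], K > 0, and let H : S_+ → (0,∞) be continuous. Let 𝒥 be the set of continuous functions g : S_+ × ℝ → [0,∞) such that: (1) sup_{u∈S_+} g(u,0)H(u) ≤ K; (2) t ↦ g(u,t)e^{αt} is nondecreasing for every u ∈ S_+; (3) t ↦ g(u,t)e^{(α−1)t} is nonincreasing for every u ∈ S_+; (4) for each t ∈ ℝ the map u ↦ g(u,t)e^{αt}H(u) is α-Hölder continuous with constant (max(1,e^t))·K. Then 𝒥 is a compact subset of C(S_+ × ℝ) with respect to the topology of uniform convergence on compact sets. -/

import Mathlib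

open MeasureTheory ProbabilityTheory Filter Set
open scoped ENNReal NNReal Topology

noncomputable section

namespace MST

/-- Vectors in `ℝ^d`. -/
abbrev Vec (d : ℕ) := Fin d → ℝ

/-- Nonnegative `d × d` matrices live in the space of all real `d × d` matrices. -/
abbrev Mat (d : ℕ) := Matrix (Fin d) (Fin d) ℝ

instance (d : ℕ) : MeasurableSpace (Mat d) :=
  (inferInstance : MeasurableSpace (Fin d → Fin d → ℝ))

/-- The space in which the random element `T = (Q, (T_i)_{i ≥ 1})` takes its values. -/
abbrev TType (d : ℕ) := Vec d × (ℕ → Mat d)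

/-- Nodes of the Ulam--Harris tree. -/
abbrev TreeIdx := List ℕ

variable (d : ℕ)

/-- The Euclidean norm on `ℝ^d`. -/
def enorm (x : Vec d) : ℝ := Real.sqrt (∑ i, (x i) ^ 2)

/-- The standard inner product on `ℝ^d`. -/
def inp (x y : Vec d) : ℝ := ∑ i, x i * y i

/-- The vector `𝟙 = (1, …, 1)ᵀ`. -/
def ones : Vec d := fun _ => 1

/-- Operator norm of a matrix, induced by the Euclidean norm. -/
def opNorm (a : Mat d) : ℝ :=
  sSup ((fun x => enorm d (a.mulVec x)) '' {x | enorm d x = 1})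

/-- `S₊`, the intersection of the unit sphere with the nonnegative cone. -/
def Sp : Set (Vec d) := {x | (∀ i, 0 ≤ x i) ∧ enorm d x = 1}

/-- The interior of `S₊` (unit vectors with all coordinates positive). -/
def SpInt : Set (Vec d) := {x | (∀ i, 0 < x i) ∧ enorm d x = 1}

/-- `ι(a) = inf_{x ∈ S₊} |a x|`. -/
def iota (a : Mat d) : ℝ := sInf ((fun x => enorm d (a.mulVec x)) '' Sp d)

/-- Normalization `x ↦ x/|x|`. -/
def nrmlz (x : Vec d) : Vec d := (enorm d x)⁻¹ • x

/-- A matrix is allowable if it has no zero row and no zero column. -/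
def allowable (a : Mat d) : Prop := (∀ i, ∃ j, a i j ≠ 0) ∧ (∀ j, ∃ i, a i j ≠ 0)

/-- A matrix is (entrywise) positive if all its entries are positive. -/
def entrywisePos (a : Mat d) : Prop := ∀ i j, 0 < a i j

/-- A matrix is nonnegative if all its entries are nonnegative. -/
def nonnegMat (a : Mat d) : Prop := ∀ i j, 0 ≤ a i j

/-- Topological support of a measure on matrices. -/
def msupport (μm : Measure (Mat d)) : Set (Mat d) :=
  {a | ∀ U : Set (Mat d), IsOpen U → a ∈ U → 0 < μm U}

/-- The subsemigroup `[supp μ]` generated by the support of `μ`. -/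
def suppSemigroup (μm : Measure (Mat d)) : Set (Mat d) :=
  (Subsemigroup.closure (msupport d μm) : Subsemigroup (Mat d))

/-- Branch weights: `L(∅) = Id`, `L(vi) = L(v) T_i(v)`. -/
def bw {Ω : Type} (Tfam : TreeIdx → Ω → TType d) (v : TreeIdx) (ω : Ω) : Mat d :=
  ((List.range v.length).map fun k => ((Tfam (v.take k) ω).2 (v.getD k 0))).prod

/-- The basic data of the weighted branching model: an i.i.d. family `(T(v))_{v}` of copies
of `T = (Q, (T_i)_{i≥1})` indexed by the Ulam--Harris tree, together with the number `N` of
nonzero weights at the root. -/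
structure Setup (d : ℕ) (Ω : Type) [MeasurableSpace Ω] (P : Measure Ω) : Type where
  Tfam : TreeIdx → Ω → TType d
  Nf : Ω → ℕ
  meas_T : ∀ v, Measurable (Tfam v)
  meas_N : Measurable Nf
  ident : ∀ v, Measure.map (Tfam v) P = Measure.map (Tfam []) P
  indep : iIndepFun Tfam P

variable {Ω : Type} [MeasurableSpace Ω] {P : Measure Ω}

/-- `E N`. -/
def ENn (S : Setup d Ω P) : ℝ≥0∞ := ∫⁻ ω, (S.Nf ω : ℝ≥0∞) ∂P

/-- (A0): the weights and the immigration term are nonnegative. -/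
def A0 (S : Setup d Ω P) : Prop :=
  ∀ᵐ ω ∂P, (∀ i, 0 ≤ (S.Tfam [] ω).1 i) ∧ ∀ k, nonnegMat d ((S.Tfam [] ω).2 k)

/-- (A1): `T_i ≠ 0` exactly for `i < N`, `N` finite. -/
def A1 (S : Setup d Ω P) : Prop := ∀ᵐ ω ∂P, ∀ i, ((S.Tfam [] ω).2 i ≠ 0 ↔ i < S.Nf ω)

/-- (A2): `N ≥ 1` a.s. and `1 < E N < ∞`. -/
def A2 (S : Setup d Ω P) : Prop :=
  (∀ᵐ ω ∂P, 1 ≤ S.Nf ω) ∧ 1 < ENn d S ∧ ENn d S < ∞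

/-- The measure `μ` on matrices, `∫ f dμ = (E N)⁻¹ E[Σ_{i<N} f(T_i)]`. -/
def muM (S : Setup d Ω P) : Measure (Mat d) :=
  (ENn d S)⁻¹ •
    Measure.sum fun i : ℕ =>
      Measure.map (fun ω => (S.Tfam [] ω).2 i) (P.restrict {ω | i < S.Nf ω})

/-- `m(s) = E N · lim_n (E ‖M_n ⋯ M_1‖^s)^{1/n}`, as an extended real number. -/
def mfun (S : Setup d Ω P) (s : ℝ) : ℝ≥0∞ :=
  ENn d S *
    Filter.limsup (fun n : ℕ =>
      (∫⁻ a : Fin n → Mat d,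
          ENNReal.ofReal ((opNorm d (List.ofFn fun k => a k).prod) ^ s)
          ∂(Measure.pi fun _ => muM d S)) ^ ((n : ℝ)⁻¹)) atTop

/-- `I_μ = {s ≥ 0 : m(s) < ∞}`. -/
def Imu (S : Setup d Ω P) : Set ℝ := {s | 0 ≤ s ∧ mfun d S s < ∞}

/-- `m` as a real-valued function (on `I_μ`). -/
def mReal (S : Setup d Ω P) (s : ℝ) : ℝ := (mfun d S s).toReal

/-- (A3): the semigroup generated by `supp μ` consists of allowable matrices and
contains a positive one. -/
def A3 (S : Setup d Ω P) : Prop :=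
  (∀ a ∈ suppSemigroup d (muM d S), allowable d a) ∧
    ∃ a ∈ suppSemigroup d (muM d S), entrywisePos d a

/-- (A4): the additive group generated by the logarithms of the Perron--Frobenius
eigenvalues of the positive matrices in `[supp μ]` is dense in `ℝ`. -/
def A4 (S : Setup d Ω P) : Prop :=
  Dense (AddSubgroup.closure
    {t : ℝ | ∃ a ∈ suppSemigroup d (muM d S), entrywisePos d a ∧
      ∃ r : ℝ, 0 < r ∧ t = Real.log r ∧
        ∃ x : Vec d, (∀ i, 0 < x i) ∧ a.mulVec x = r • x} : Set ℝ)

/-- (A5): `α ∈ (0,1]` lies in the interior of `I_μ` and `m(α) = 1`. -/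
def A5 (S : Setup d Ω P) (α : ℝ) : Prop :=
  0 < α ∧ α ≤ 1 ∧ α ∈ interior (Imu d S) ∧ mfun d S α = 1

/-- (A6). -/
def A6 (S : Setup d Ω P) (α : ℝ) : Prop :=
  (∫⁻ a, ENNReal.ofReal ((opNorm d a) ^ α * Real.log (1 + opNorm d a)) ∂(muM d S) < ∞) ∧
    (∫⁻ a, ENNReal.ofReal ((opNorm d a) ^ α * |Real.log (iota d (Matrix.transpose a))|)
        ∂(muM d S) < ∞)

/-- (A6a). -/
def A6a (S : Setup d Ω P) (α : ℝ) : Prop :=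
  (∫⁻ a, ENNReal.ofReal ((opNorm d a) ^ α * Real.log (1 + opNorm d a)) ∂(muM d S) < ∞) ∧
    (∫⁻ a, ENNReal.ofReal ((1 + opNorm d a) ^ α * |Real.log (iota d (Matrix.transpose a))|)
        ∂(muM d S) < ∞)

/-- (A7): `E ‖M‖ < ∞`. -/
def A7 (S : Setup d Ω P) : Prop := ∫⁻ a, ENNReal.ofReal (opNorm d a) ∂(muM d S) < ∞

/-- (A8): `0 < E |Q|^{α+ε} < ∞` for some `ε > 0`. -/
def A8 (S : Setup d Ω P) (α : ℝ) : Prop :=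
  ∃ ε > (0 : ℝ),
    0 < ∫⁻ ω, ENNReal.ofReal ((enorm d (S.Tfam [] ω).1) ^ (α + ε)) ∂P ∧
      ∫⁻ ω, ENNReal.ofReal ((enorm d (S.Tfam [] ω).1) ^ (α + ε)) ∂P < ∞

/-- `H^s(x) = ∫ ⟨x,y⟩^s ν(dy)`. -/
def Hfun (νa : Measure (Vec d)) (α : ℝ) (x : Vec d) : ℝ := ∫ y, (inp d x y) ^ α ∂νa

/-- `ν^α`, the eigenmeasure on `S₊` with eigenvalue `(E N)⁻¹ m(α)`. -/
def IsNuAlpha (S : Setup d Ω P) (α : ℝ) (νa : Measure (Vec d)) : Prop :=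
  IsProbabilityMeasure νa ∧ νa (Sp d)ᶜ = 0 ∧
    ∀ f : Vec d → ℝ, Continuous f →
      (∫ x, ∫ a, (enorm d (a.mulVec x)) ^ α * f (nrmlz d (a.mulVec x)) ∂(muM d S) ∂νa)
        = ((ENn d S).toReal)⁻¹ * mReal d S α * ∫ x, f x ∂νa

/-- The martingale `W_n(u) = Σ_{|v|=n} H^α(L(v)ᵀ u)`. -/
def Wn (S : Setup d Ω P) (νa : Measure (Vec d)) (α : ℝ) (n : ℕ) (u : Vec d) (ω : Ω) : ℝ :=
  ∑' v : {v : TreeIdx // v.length = n},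
    Hfun d νa α ((Matrix.transpose (bw d S.Tfam v ω)).mulVec u)

/-- The summands of `W* = Σ_v L(v) Q(v)`. -/
def WstarTerm (S : Setup d Ω P) (v : TreeIdx) (ω : Ω) : Vec d :=
  (bw d S.Tfam v ω).mulVec ((S.Tfam v ω).1)

/-- `W* = Σ_{n≥0} Σ_{|v|=n} L(v) Q(v)`. -/
def Wstar (S : Setup d Ω P) (ω : Ω) : Vec d := ∑' v : TreeIdx, WstarTerm d S v ω

/-- Laplace transform of a (probability) measure on `ℝ^d_{≥0}`. -/
def laplace (η : Measure (Vec d)) (x : Vec d) : ℝ := ∫ z, Real.exp (-(inp d x z)) ∂η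

/-- `η` is (the law of) a fixed point of the homogeneous multivariate smoothing transform
with weight law `τ`: on some probability space there are `T' ∼ τ` and an i.i.d. sequence
`(X_i) ∼ η`, independent of `T'`, with `Σ_{i<N'} T'_i X_i ∼ η`. -/
def IsFPhom (τ : Measure (TType d)) (η : Measure (Vec d)) : Prop :=
  IsProbabilityMeasure η ∧ (∀ᵐ x ∂η, ∀ i, 0 ≤ x i) ∧
    ∃ (Ω' : Type) (_ : MeasurableSpace Ω') (P' : Measure Ω') (_ : IsProbabilityMeasure P')
      (T' : Ω' → TType d) (X' : ℕ → Ω' → Vec d) (N' : Ω' → ℕ),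
      Measurable T' ∧ (∀ i, Measurable (X' i)) ∧ Measurable N' ∧
        Measure.map T' P' = τ ∧ (∀ i, Measure.map (X' i) P' = η) ∧
        iIndepFun X' P' ∧
        IndepFun T' (fun ω i => X' i ω) P' ∧
        (∀ᵐ ω ∂P', ∀ i, ((T' ω).2 i ≠ 0 ↔ i < N' ω)) ∧
        Measure.map (fun ω => ∑ i ∈ Finset.range (N' ω), ((T' ω).2 i).mulVec (X' i ω)) P'
          = η

/-- `η` is (the law of) a fixed point of the inhomogeneous multivariate smoothing transform. -/
def IsFPinhom (τ : Measure (TType d)) (η : Measure (Vec d)) : Prop :=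
  IsProbabilityMeasure η ∧ (∀ᵐ x ∂η, ∀ i, 0 ≤ x i) ∧
    ∃ (Ω' : Type) (_ : MeasurableSpace Ω') (P' : Measure Ω') (_ : IsProbabilityMeasure P')
      (T' : Ω' → TType d) (X' : ℕ → Ω' → Vec d) (N' : Ω' → ℕ),
      Measurable T' ∧ (∀ i, Measurable (X' i)) ∧ Measurable N' ∧
        Measure.map T' P' = τ ∧ (∀ i, Measure.map (X' i) P' = η) ∧
        iIndepFun X' P' ∧
        IndepFun T' (fun ω i => X' i ω) P' ∧
        (∀ᵐ ω ∂P', ∀ i, ((T' ω).2 i ≠ 0 ↔ i < N' ω)) ∧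
        Measure.map
          (fun ω => (∑ i ∈ Finset.range (N' ω), ((T' ω).2 i).mulVec (X' i ω)) + (T' ω).1) P'
          = η

/-- `S^u(v) = -log |L(v)ᵀ u|`. -/
def Su (S : Setup d Ω P) (u : Vec d) (v : TreeIdx) (ω : Ω) : ℝ :=
  -Real.log (enorm d ((Matrix.transpose (bw d S.Tfam v ω)).mulVec u))

/-- `U^u(v) = L(v)ᵀ u / |L(v)ᵀ u|`. -/
def Uu (S : Setup d Ω P) (u : Vec d) (v : TreeIdx) (ω : Ω) : Vec d :=
  nrmlz d ((Matrix.transpose (bw d S.Tfam v ω)).mulVec u)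

/-- Membership in the stopping line `J^u_t`. -/
def inJ (S : Setup d Ω P) (u : Vec d) (t : ℝ) (v : TreeIdx) (ω : Ω) : Prop :=
  t < Su d S u v ω ∧ ∀ k < v.length, Su d S u (v.take k) ω ≤ t

/-- `v` has no ancestor (including itself) in the stopping line `J^u_t`. -/
def noAncJ (S : Setup d Ω P) (u : Vec d) (t : ℝ) (v : TreeIdx) (ω : Ω) : Prop :=
  ∀ k ≤ v.length, ¬ inJ d S u t (v.take k) ω

/-- The pre-`J^u_t` σ-algebra `B_{J^u_t} = σ(T(v) : v has no ancestor in J^u_t)`. -/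
def BJ (S : Setup d Ω P) (u : Vec d) (t : ℝ) : MeasurableSpace Ω :=
  MeasurableSpace.generateFrom
    {A | ∃ (v : TreeIdx) (B : Set (TType d)), MeasurableSet B ∧
      A = {ω | noAncJ d S u t v ω ∧ S.Tfam v ω ∈ B}}

/-- `W_{J^u_t}(u) = Σ_{v ∈ J^u_t} H^α(L(v)ᵀ u)`. -/
def WJ (S : Setup d Ω P) (νa : Measure (Vec d)) (α : ℝ) (u : Vec d) (t : ℝ) (ω : Ω) : ℝ :=
  ∑' v : TreeIdx,
    Set.indicator {ω' | inJ d S u t v ω'}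
      (fun ω' => Hfun d νa α ((Matrix.transpose (bw d S.Tfam v ω')).mulVec u)) ω

/-- `W^f_{J^u_t}(u) = Σ_{v ∈ J^u_t} H^α(L(v)ᵀ u) f(U^u(v), S^u(v) - t)`. -/
def WfJ (S : Setup d Ω P) (νa : Measure (Vec d)) (α : ℝ) (u : Vec d) (t : ℝ)
    (f : Vec d × ℝ → ℝ) (ω : Ω) : ℝ :=
  ∑' v : TreeIdx,
    Set.indicator {ω' | inJ d S u t v ω'}
      (fun ω' => Hfun d νa α ((Matrix.transpose (bw d S.Tfam v ω')).mulVec u) *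
        f (Uu d S u v ω', Su d S u v ω' - t)) ω

/-- A positive function is slowly varying at `0`. -/
def SlowVary0 (L : ℝ → ℝ) : Prop :=
  (∀ t : ℝ, 0 < t → 0 < L t) ∧
    ∀ c : ℝ, 0 < c → Tendsto (fun t => L (c * t) / L t) (nhdsWithin 0 (Ioi 0)) (nhds 1)

/-- `φ` is `L`-`α`-regular: `0 < liminf_{r→0} (1-φ(r𝟙))/(L(r)r^α) ≤ limsup < ∞`. -/
def LAlphaRegular (φ : Vec d → ℝ) (L : ℝ → ℝ) (α : ℝ) : Prop :=
  ∃ c C : ℝ, 0 < c ∧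
    ∀ᶠ r in nhdsWithin (0:ℝ) (Ioi 0),
      c ≤ (1 - φ (r • ones d)) / (L r * r ^ α) ∧ (1 - φ (r • ones d)) / (L r * r ^ α) ≤ C

/-- `φ` is `L`-`α`-elementary: `lim_{r→0} (1-φ(r𝟙))/(L(r)r^α)` exists in `(0,∞)`. -/
def LAlphaElementary (φ : Vec d → ℝ) (L : ℝ → ℝ) (α : ℝ) : Prop :=
  ∃ K : ℝ, 0 < K ∧
    Tendsto (fun r => (1 - φ (r • ones d)) / (L r * r ^ α)) (nhdsWithin (0:ℝ) (Ioi 0)) (nhds K)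

/-- `α`-regular (`L ≡ 1`). -/
def AlphaRegular (φ : Vec d → ℝ) (α : ℝ) : Prop := LAlphaRegular d φ (fun _ => 1) α


/-- `D(x) = (1 - φ(x)) / H(x)` for the Laplace transform `φ` of `ρ`. -/
def Dfun (ρ νm : Measure (Vec d)) (α : ℝ) (x : Vec d) : ℝ :=
  (1 - laplace d ρ x) / Hfun d νm α x

/-!
The two monotonicity conditions say that `t ↦ g (u, t)` grows or decays at most like `e^{|t - s|}`
away from any `s`; with `s = 0` and condition (1) this bounds `g (u, t)` by `K e^{|t|} / H u`.
Together with the Hölder condition this yields at every point `(u₀, t₀)` a modulus of continuity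
that is the same for all members of `𝒥`. So `𝒥` is equicontinuous, and it is a pointwise closed
and pointwise bounded family, hence compact for pointwise convergence (Tychonoff); Arzelà–Ascoli
upgrades this to compactness for uniform convergence on compact sets.
-/

lemma le_mul_exp_of_mul_exp_le {a b x y c : ℝ} (h : a * Real.exp x ≤ b * Real.exp y)
    (hb : 0 ≤ b) (hc : y - x ≤ c) : a ≤ b * Real.exp c :=
  calc a = a * Real.exp x * Real.exp (-x) := by rw [mul_assoc, ← Real.exp_add]; simp
    _ ≤ b * Real.exp y * Real.exp (-x) := by gcongr
    _ = b * Real.exp (y - x) := by rw [mul_assoc, ← Real.exp_add, sub_eq_add_neg]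
    _ ≤ b * Real.exp c := by gcongr

lemma le_mul_exp_abs_sub {α : ℝ} {φ : ℝ → ℝ} (hα0 : 0 ≤ α) (hα1 : α ≤ 1) (hφ : ∀ t, 0 ≤ φ t)
    (hmono : Monotone fun t => φ t * Real.exp (α * t))
    (hanti : Antitone fun t => φ t * Real.exp ((α - 1) * t)) (s t : ℝ) :
    φ t ≤ φ s * Real.exp |t - s| := by
  rcases le_total s t with hst | hts
  · exact le_mul_exp_of_mul_exp_le (hanti hst) (hφ s) (by
      rw [abs_of_nonneg (sub_nonneg.2 hst)]; nlinarith)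
  · exact le_mul_exp_of_mul_exp_le (hmono hts) (hφ s) (by
      rw [abs_of_nonpos (sub_nonpos.2 hts)]; nlinarith)

lemma abs_sub_le_mul_exp_abs_sub {α : ℝ} {φ : ℝ → ℝ} (hα0 : 0 ≤ α) (hα1 : α ≤ 1)
    (hφ : ∀ t, 0 ≤ φ t) (hmono : Monotone fun t => φ t * Real.exp (α * t))
    (hanti : Antitone fun t => φ t * Real.exp ((α - 1) * t)) (s t : ℝ) :
    |φ t - φ s| ≤ (φ t + φ s) * (Real.exp |t - s| - 1) := by
  have hts := le_mul_exp_abs_sub hα0 hα1 hφ hmono hanti s t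
  have hst := le_mul_exp_abs_sub hα0 hα1 hφ hmono hanti t s
  rw [abs_sub_comm s t] at hst
  have hexp : 1 ≤ Real.exp |t - s| := Real.one_le_exp (abs_nonneg _)
  rw [abs_sub_le_iff]
  constructor <;> nlinarith [hφ s, hφ t]

lemma max_one_exp_le_exp_mul_add_abs {α : ℝ} (hα0 : 0 ≤ α) (hα1 : α ≤ 1) (t : ℝ) :
    max 1 (Real.exp t) ≤ Real.exp (α * t + |t|) := by
  have key : 0 ≤ α * t + |t| ∧ t ≤ α * t + |t| := by
    rcases abs_cases t with ⟨h, ht⟩ | ⟨h, ht⟩ <;> rw [h] <;> constructor <;> nlinarith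
  exact max_le (Real.one_le_exp key.1) (Real.exp_le_exp.2 key.2)

section Admissible

variable {X : Type*} {α K : ℝ} {H : X → ℝ} {δ : X → X → ℝ} {f : X × ℝ → ℝ}

/-- The set `𝒥` of the paper as a set of plain functions (its members turn out to be continuous),
with the Hölder condition measured by an arbitrary `δ` in place of the distance `|u - w|`. -/
def admissible (α K : ℝ) (H : X → ℝ) (δ : X → X → ℝ) : Set (X × ℝ → ℝ) :=
  {f | (∀ p, 0 ≤ f p) ∧
    (∀ u, f (u, 0) * H u ≤ K) ∧
    (∀ u, Monotone fun t : ℝ => f (u, t) * Real.exp (α * t)) ∧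
    (∀ u, Antitone fun t : ℝ => f (u, t) * Real.exp ((α - 1) * t)) ∧
    ∀ (t : ℝ) (u w : X),
      |f (u, t) * Real.exp (α * t) * H u - f (w, t) * Real.exp (α * t) * H w|
        ≤ max 1 (Real.exp t) * K * δ u w ^ α}

lemma apply_le_div_mul_exp_abs (hα0 : 0 ≤ α) (hα1 : α ≤ 1) (hf : f ∈ admissible α K H δ)
    {u : X} (hu : 0 < H u) (t : ℝ) : f (u, t) ≤ K / H u * Real.exp |t| := by
  obtain ⟨hnonneg, hzero, hmono, hanti, -⟩ := hf
  calc f (u, t) ≤ f (u, 0) * Real.exp |t - 0| :=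
        le_mul_exp_abs_sub hα0 hα1 (fun t => hnonneg _) (hmono u) (hanti u) 0 t
    _ ≤ K / H u * Real.exp |t| := by
        rw [sub_zero]
        gcongr
        rw [le_div_iff₀ hu]
        exact hzero u

lemma abs_mul_sub_mul_le (hα0 : 0 ≤ α) (hα1 : α ≤ 1) (hf : f ∈ admissible α K H δ)
    (t : ℝ) (u w : X) :
    |f (u, t) * H u - f (w, t) * H w| ≤ Real.exp |t| * (K * δ u w ^ α) := by
  have hholder := hf.2.2.2.2 t u w
  have hKδ : 0 ≤ K * δ u w ^ α := by
    have := (abs_nonneg _).trans hholder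
    rw [mul_assoc] at this
    exact nonneg_of_mul_nonneg_right this (by positivity)
  refine le_of_mul_le_mul_right ?_ (Real.exp_pos (α * t))
  calc |f (u, t) * H u - f (w, t) * H w| * Real.exp (α * t)
      = |(f (u, t) * H u - f (w, t) * H w) * Real.exp (α * t)| := by
        rw [abs_mul, abs_of_pos (Real.exp_pos _)]
    _ = |f (u, t) * Real.exp (α * t) * H u - f (w, t) * Real.exp (α * t) * H w| := by
        congr 1; ring
    _ ≤ max 1 (Real.exp t) * (K * δ u w ^ α) := by rw [← mul_assoc]; exact hholder
    _ ≤ Real.exp (α * t + |t|) * (K * δ u w ^ α) := by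
        gcongr; exact max_one_exp_le_exp_mul_add_abs hα0 hα1 t
    _ = Real.exp |t| * (K * δ u w ^ α) * Real.exp (α * t) := by
        rw [Real.exp_add]; ring

def admissibleModulus (α K : ℝ) (H : X → ℝ) (δ : X → X → ℝ) (u₀ : X) (t₀ : ℝ)
    (p : X × ℝ) : ℝ :=
  Real.exp |p.2| * (K * δ p.1 u₀ ^ α + K / H u₀ * |H u₀ - H p.1|) / H p.1
    + K / H u₀ * (Real.exp |p.2| + Real.exp |t₀|) * (Real.exp |p.2 - t₀| - 1)

lemma abs_sub_le_admissibleModulus (hα0 : 0 ≤ α) (hα1 : α ≤ 1) (hH : ∀ u, 0 < H u)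
    (hf : f ∈ admissible α K H δ) (u₀ : X) (t₀ : ℝ) (p : X × ℝ) :
    |f p - f (u₀, t₀)| ≤ admissibleModulus α K H δ u₀ t₀ p := by
  obtain ⟨u, t⟩ := p
  have hbound := apply_le_div_mul_exp_abs hα0 hα1 hf (hH u₀)
  have hspace : |f (u, t) - f (u₀, t)|
      ≤ Real.exp |t| * (K * δ u u₀ ^ α + K / H u₀ * |H u₀ - H u|) / H u := by
    rw [le_div_iff₀ (hH u)]
    calc |f (u, t) - f (u₀, t)| * H u = |(f (u, t) - f (u₀, t)) * H u| := by
          rw [abs_mul, abs_of_pos (hH u)]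
      _ = |(f (u, t) * H u - f (u₀, t) * H u₀) + f (u₀, t) * (H u₀ - H u)| := by
          congr 1; ring
      _ ≤ |f (u, t) * H u - f (u₀, t) * H u₀| + f (u₀, t) * |H u₀ - H u| := by
          rw [← abs_of_nonneg (hf.1 (u₀, t)), ← abs_mul, abs_of_nonneg (hf.1 (u₀, t))]
          exact abs_add_le _ _
      _ ≤ Real.exp |t| * (K * δ u u₀ ^ α) + K / H u₀ * Real.exp |t| * |H u₀ - H u| := by
          gcongr
          · exact abs_mul_sub_mul_le hα0 hα1 hf t u u₀
          · exact hbound t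
      _ = Real.exp |t| * (K * δ u u₀ ^ α + K / H u₀ * |H u₀ - H u|) := by ring
  have htime : |f (u₀, t) - f (u₀, t₀)|
      ≤ K / H u₀ * (Real.exp |t| + Real.exp |t₀|) * (Real.exp |t - t₀| - 1) := by
    obtain ⟨hnonneg, -, hmono, hanti, -⟩ := hf
    refine (abs_sub_le_mul_exp_abs_sub hα0 hα1 (fun t => hnonneg _) (hmono u₀) (hanti u₀)
      t₀ t).trans ?_
    have : 0 ≤ Real.exp |t - t₀| - 1 := sub_nonneg.2 (Real.one_le_exp (abs_nonneg _))
    rw [mul_add]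
    gcongr <;> exact hbound _
  calc |f (u, t) - f (u₀, t₀)| ≤ |f (u, t) - f (u₀, t)| + |f (u₀, t) - f (u₀, t₀)| :=
        abs_sub_le _ _ _
    _ ≤ _ := add_le_add hspace htime

lemma isClosed_admissible : IsClosed (admissible α K H δ) := by
  simp only [admissible, Monotone, Antitone, Set.ofPred_and, Set.ofPred_forall]
  refine (isClosed_iInter fun _ => ?_).inter ((isClosed_iInter fun _ => ?_).inter
    ((isClosed_iInter fun _ => ?_).inter ((isClosed_iInter fun _ => ?_).inter
      (isClosed_iInter fun _ => ?_))))
  all_goals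
    repeat refine isClosed_iInter fun _ => ?_
    exact isClosed_le (by fun_prop) (by fun_prop)

lemma isCompact_admissible (hα0 : 0 ≤ α) (hα1 : α ≤ 1) (hH : ∀ u, 0 < H u) :
    IsCompact (admissible α K H δ) :=
  (isCompact_univ_pi fun p : X × ℝ => isCompact_Icc (a := 0) (b := K / H p.1 * Real.exp |p.2|))
    |>.of_isClosed_subset isClosed_admissible fun _ hf p _ =>
      ⟨hf.1 p, apply_le_div_mul_exp_abs hα0 hα1 hf (hH p.1) p.2⟩

variable [TopologicalSpace X]

lemma tendsto_admissibleModulus (hα : 0 < α) {u₀ : X} (hHc : ContinuousAt H u₀) (hH : H u₀ ≠ 0)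
    (hδ : Tendsto (fun u => δ u u₀) (𝓝 u₀) (𝓝 0)) (t₀ : ℝ) :
    Tendsto (admissibleModulus α K H δ u₀ t₀) (𝓝 (u₀, t₀)) (𝓝 0) := by
  have hfst : Tendsto Prod.fst (𝓝 (u₀, t₀)) (𝓝 u₀) := continuous_fst.tendsto _
  have hrpow : Tendsto (fun p : X × ℝ => δ p.1 u₀ ^ α) (𝓝 (u₀, t₀)) (𝓝 0) := by
    simpa [Real.zero_rpow hα.ne'] using (hδ.comp hfst).rpow_const (Or.inr hα.le)
  have hHp : Tendsto (fun p : X × ℝ => H p.1) (𝓝 (u₀, t₀)) (𝓝 (H u₀)) := hHc.tendsto.comp hfst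
  have hdiff : Tendsto (fun p : X × ℝ => |H u₀ - H p.1|) (𝓝 (u₀, t₀)) (𝓝 0) := by
    simpa using (hHp.const_sub (H u₀)).abs
  have hexp : Continuous fun p : X × ℝ => Real.exp |p.2| := by fun_prop
  have hshift : Tendsto (fun p : X × ℝ => Real.exp |p.2 - t₀| - 1) (𝓝 (u₀, t₀)) (𝓝 0) := by
    have : Continuous fun p : X × ℝ => Real.exp |p.2 - t₀| - 1 := by fun_prop
    simpa using this.tendsto (u₀, t₀)
  have hlim := (((hexp.tendsto _).mul ((hrpow.const_mul K).add (hdiff.const_mul (K / H u₀)))).div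
    hHp hH).add ((((hexp.tendsto _).add (tendsto_const_nhds (x := Real.exp |t₀|))).const_mul
      (K / H u₀)).mul hshift)
  unfold admissibleModulus
  simpa using hlim

lemma equicontinuous_admissible (hα : 0 < α) (hα1 : α ≤ 1) (hHc : Continuous H)
    (hH : ∀ u, 0 < H u) (hδ : ∀ w, Tendsto (fun u => δ u w) (𝓝 w) (𝓝 0)) :
    Equicontinuous ((↑) : admissible α K H δ → X × ℝ → ℝ) := by
  rintro ⟨u₀, t₀⟩
  refine Metric.equicontinuousAt_of_continuity_modulus _
    (tendsto_admissibleModulus (K := K) hα hHc.continuousAt (hH u₀).ne' (hδ u₀) t₀) _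
    (Eventually.of_forall fun p f => ?_)
  rw [Real.dist_eq, abs_sub_comm]
  exact abs_sub_le_admissibleModulus hα.le hα1 hH f.2 u₀ t₀ p

theorem isCompact_setOf_coe_mem_admissible (hα : 0 < α) (hα1 : α ≤ 1) (hHc : Continuous H)
    (hH : ∀ u, 0 < H u) (hδ : ∀ w, Tendsto (fun u => δ u w) (𝓝 w) (𝓝 0)) :
    IsCompact {g : C(X × ℝ, ℝ) | ⇑g ∈ admissible α K H δ} := by
  have hequi := equicontinuous_admissible (K := K) hα hα1 hHc hH hδ
  have himage : ContinuousMap.toFun '' {g : C(X × ℝ, ℝ) | ⇑g ∈ admissible α K H δ}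
      = admissible α K H δ := by
    ext f
    exact ⟨by rintro ⟨g, hg, rfl⟩; exact hg,
      fun hf => ⟨⟨f, hequi.continuous ⟨f, hf⟩⟩, hf, rfl⟩⟩
  refine ArzelaAscoli.isCompact_of_equicontinuous _ ?_ ?_
  · rw [himage]
    exact isCompact_admissible hα.le hα1 hH
  · exact hequi.comp fun g : {g : C(X × ℝ, ℝ) | ⇑g ∈ admissible α K H δ} => ⟨g.1, g.2⟩

end Admissible

@[fun_prop]
lemma continuous_enorm : Continuous (enorm d) := by
  unfold enorm
  fun_prop

theorem statement14_general {d : ℕ}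
    (α K : ℝ) (hα : 0 < α) (hα1 : α ≤ 1)
    (H : Sp d → ℝ) (hHc : Continuous H) (hHpos : ∀ u, 0 < H u) :
    IsCompact {g : C(↥(Sp d) × ℝ, ℝ) |
      (∀ p, 0 ≤ g p) ∧
      (∀ u : ↥(Sp d), g (u, 0) * H u ≤ K) ∧
      (∀ u : ↥(Sp d), Monotone fun t : ℝ => g (u, t) * Real.exp (α * t)) ∧
      (∀ u : ↥(Sp d), Antitone fun t : ℝ => g (u, t) * Real.exp ((α - 1) * t)) ∧
      ∀ (t : ℝ) (u w : ↥(Sp d)),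
        |g (u, t) * Real.exp (α * t) * H u - g (w, t) * Real.exp (α * t) * H w|
          ≤ max 1 (Real.exp t) * K * (enorm d ((u : Vec d) - (w : Vec d))) ^ α} := by
  have hδ (w : Sp d) : Tendsto (fun u : Sp d => enorm d ((u : Vec d) - w)) (𝓝 w) (𝓝 0) := by
    have : Continuous fun u : Sp d => enorm d ((u : Vec d) - w) := by fun_prop
    simpa [enorm] using this.tendsto w
  exact isCompact_setOf_coe_mem_admissible hα hα1 hHc hHpos hδ

/-- Lemma 8.6: the set `𝒥` of continuous functions `g : S₊ × ℝ → [0,∞)`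
satisfying (1)–(4) is a compact subset of `C(S₊ × ℝ)` with the topology of uniform
convergence on compact sets (the compact-open topology). -/
theorem statement14 {d : ℕ} (hd : 1 ≤ d)
    (α K : ℝ) (hα : 0 < α) (hα1 : α ≤ 1) (hK : 0 < K)
    (H : Sp d → ℝ) (hHc : Continuous H) (hHpos : ∀ u, 0 < H u) :
    IsCompact {g : C(↥(Sp d) × ℝ, ℝ) |
      (∀ p, 0 ≤ g p) ∧
      (∀ u : ↥(Sp d), g (u, 0) * H u ≤ K) ∧
      (∀ u : ↥(Sp d), Monotone fun t : ℝ => g (u, t) * Real.exp (α * t)) ∧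
      (∀ u : ↥(Sp d), Antitone fun t : ℝ => g (u, t) * Real.exp ((α - 1) * t)) ∧
      ∀ (t : ℝ) (u w : ↥(Sp d)),
        |g (u, t) * Real.exp (α * t) * H u - g (w, t) * Real.exp (α * t) * H w|
          ≤ max 1 (Real.exp t) * K * (enorm d ((u : Vec d) - (w : Vec d))) ^ α} :=
  statement14_general α K hα hα1 H hHc hHpos

end MST
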